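/- arXiv:1704.08312 — 4 statements merged into one kernel-verified Lean document; each statement's English description precedes it below -/
import Mathlib

section
/- For f(x) = Σ_{n=0}^N r_n x^n with r_N = 1, the remainder of f modulo x² - ax - b equals (Σ_{n=0}^N r_n P_n(a,b))·x + (b·Σ_{n=1}^N r_n P_{n-1}(a,b) + r_0), where P_n(a,b) is the linear coefficient of the remainder of x^n modulo x² - ax - b. -/
open Polynomial Finset

private lemma uniq_rem (a b : ℝ) (g1 g2 : ℝ[X]) (c1 c0 d1 d0 : ℝ)
    (h : (X ^ 2 - C a * X - C b) * g1 + C c1 * X + C c0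
       = (X ^ 2 - C a * X - C b) * g2 + C d1 * X + C d0) :
    c1 = d1 ∧ c0 = d0 := by
  have hD : Monic ((X:ℝ[X])^2 - C a * X - C b) := by monicity!
  have hDdeg : ((X:ℝ[X])^2 - C a * X - C b).natDegree = 2 := by compute_degree!
  have key : ((X:ℝ[X]) ^ 2 - C a * X - C b) * (g1 - g2)
      = (C d1 * X + C d0) - (C c1 * X + C c0) := by ring_nf; linear_combination h
  have hg : g1 = g2 := by
    by_contra hne
    have hsub : g1 - g2 ≠ 0 := sub_ne_zero.mpr hne
    have h1 : (((X:ℝ[X]) ^ 2 - C a * X - C b) * (g1 - g2)).natDegree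
        = 2 + (g1 - g2).natDegree := by
      rw [natDegree_mul hD.ne_zero hsub, hDdeg]
    have h2 : ((C d1 * X + C d0) - (C c1 * X + C c0) : ℝ[X]).natDegree ≤ 1 := by
      apply (natDegree_sub_le _ _).trans
      simp only [max_le_iff]
      constructor <;> apply (natDegree_add_le _ _).trans <;>
        simp [natDegree_C_mul_le, le_trans (natDegree_C_mul_le _ _) natDegree_X_le]
    rw [key] at h1
    omega
  rw [hg] at h
  have h' : (C c1 * X + C c0 : ℝ[X]) = C d1 * X + C d0 := by
    linear_combination h
  constructor
  · have := congrArg (fun p => coeff p 1) h'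
    simpa using this
  · have := congrArg (fun p => coeff p 0) h'
    simpa using this

theorem stmt_6 (a b : ℝ) (N : ℕ) (r : ℕ → ℝ) (hrN : r N = 1)
    (P : ℕ → ℝ)
    (hP : ∀ n : ℕ, ∃ (g : ℝ[X]) (Qn : ℝ),
      (X : ℝ[X]) ^ n = (X ^ 2 - C a * X - C b) * g + C (P n) * X + C Qn) :
    ∃ g : ℝ[X],
      (∑ n ∈ range (N + 1), C (r n) * X ^ n : ℝ[X]) =
        (X ^ 2 - C a * X - C b) * g +
          C (∑ n ∈ range (N + 1), r n * P n) * X +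
          C (b * ∑ n ∈ range N, r (n + 1) * P n + r 0) := by
  choose G Q hGQ using hP
  -- Q 0 = 1
  have hQ0 : Q 0 = 1 := by
    have h0 := hGQ 0
    have : ((X:ℝ[X]) ^ 2 - C a * X - C b) * 0 + C (0:ℝ) * X + C 1
        = (X ^ 2 - C a * X - C b) * G 0 + C (P 0) * X + C (Q 0) := by
      rw [← h0]; simp
    exact ((uniq_rem a b 0 (G 0) 0 1 (P 0) (Q 0) this).2).symm
  -- Q (n+1) = b * P n
  have hQs : ∀ n : ℕ, Q (n + 1) = b * P n := by
    intro n
    have hx : (X:ℝ[X]) ^ (n + 1)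
        = (X ^ 2 - C a * X - C b) * (X * G n + C (P n))
          + C (a * P n + Q n) * X + C (b * P n) := by
      have := hGQ n
      calc (X:ℝ[X]) ^ (n+1) = X * X ^ n := by ring
        _ = X * ((X ^ 2 - C a * X - C b) * G n + C (P n) * X + C (Q n)) := by rw [← this]
        _ = _ := by simp only [C_add, C_mul]; ring
    have h2 := hGQ (n + 1)
    rw [hx] at h2
    exact ((uniq_rem a b _ _ _ _ _ _ h2).2).symm
  refine ⟨∑ n ∈ range (N + 1), C (r n) * G n, ?_⟩
  have hsum : (∑ n ∈ range (N + 1), C (r n) * X ^ n : ℝ[X]) =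
      (X ^ 2 - C a * X - C b) * (∑ n ∈ range (N + 1), C (r n) * G n) +
        C (∑ n ∈ range (N + 1), r n * P n) * X +
        C (∑ n ∈ range (N + 1), r n * Q n) := by
    rw [mul_sum, map_sum, map_sum, sum_mul, ← sum_add_distrib, ← sum_add_distrib]
    refine sum_congr rfl fun n _ => ?_
    rw [hGQ n]; simp only [C_mul]; ring
  rw [hsum]
  congr 2
  rw [sum_range_succ' (fun n => r n * Q n) N, hQ0]
  rw [mul_sum]
  simp only [hQs]
  rw [mul_one]
  congr 1
  exact sum_congr rfl fun x _ => by ring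
end

section
/- Viewing P_n(a,b) as a polynomial in a with coefficients in ℝ[b], P_n is monic of degree n-1 in a for all n ≥ 1, and the coefficient of a^k in P_n(a,b) is a polynomial in b of degree at most ⌊(n-1-k)/2⌋. -/
open Polynomial

/-- The bivariate polynomial `P n` in variables `a` (outer) and `b` (inner),
defined by `P 0 = 0`, `P 1 = 1`, `P (n+2) = a * P (n+1) + b * P n`. -/
noncomputable def Prec : ℕ → Polynomial (Polynomial ℝ)
  | 0 => 0
  | 1 => 1
  | (n + 2) => X * Prec (n + 1) + C X * Prec n

lemma Prec_key : ∀ n : ℕ, (Prec (n + 1)).Monic ∧ (Prec (n + 1)).natDegree = n ∧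
    ∀ k : ℕ, ((Prec (n + 1)).coeff k).natDegree ≤ (n - k) / 2 := by
  intro n
  induction n using Nat.twoStepInduction with
  | zero =>
    refine ⟨monic_one, natDegree_one, fun k => ?_⟩
    rcases k with _ | k
    · simp [Prec]
    · simp [Prec, coeff_one]
  | one =>
    have h2 : Prec 2 = X := by simp [Prec]
    refine ⟨h2 ▸ monic_X, by simp [h2], fun k => ?_⟩
    rw [h2]
    rcases k with _ | _ | k <;> simp [coeff_X]
  | more n ih0 ih1 =>
    obtain ⟨m1, d1, c1⟩ := ih1
    obtain ⟨m0, d0, c0⟩ := ih0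
    have heq : Prec (n + 3) = X * Prec (n + 2) + C X * Prec (n + 1) := by
      rw [Prec]
    have hXp : (X * Prec (n + 2)).Monic := (monic_X.mul m1)
    have hdXp : (X * Prec (n + 2)).natDegree = n + 2 := by
      rw [natDegree_mul X_ne_zero m1.ne_zero, natDegree_X, d1]; omega
    have hd2 : (C X * Prec (n + 1)).natDegree < (X * Prec (n + 2)).natDegree := by
      rw [hdXp]
      calc (C X * Prec (n + 1)).natDegree ≤ (C (X : Polynomial ℝ)).natDegree +
          (Prec (n + 1)).natDegree := natDegree_mul_le
        _ = n := by simp [d0]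
        _ < n + 2 := by omega
    have hmon : (Prec (n + 3)).Monic := by
      rw [heq]
      exact hXp.add_of_left (degree_lt_degree hd2)
    have hdeg : (Prec (n + 3)).natDegree = n + 2 := by
      rw [heq, natDegree_add_eq_left_of_natDegree_lt hd2, hdXp]
    refine ⟨hmon, hdeg, fun k => ?_⟩
    rw [heq, coeff_add]
    have h1 : ((X * Prec (n + 2)).coeff k).natDegree ≤ (n + 2 - k) / 2 := by
      rcases k with _ | k
      · simp
      · rw [coeff_X_mul]
        calc ((Prec (n + 2)).coeff k).natDegree ≤ (n + 1 - k) / 2 := c1 k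
          _ ≤ (n + 2 - (k + 1)) / 2 := by omega
    have h2 : ((C X * Prec (n + 1)).coeff k).natDegree ≤ (n + 2 - k) / 2 := by
      rw [coeff_C_mul]
      by_cases hk : k ≤ n
      · calc ((X : Polynomial ℝ) * (Prec (n + 1)).coeff k).natDegree ≤
            (X : Polynomial ℝ).natDegree + ((Prec (n + 1)).coeff k).natDegree :=
            natDegree_mul_le
          _ ≤ 1 + (n - k) / 2 := by simpa using c0 k
          _ ≤ (n + 2 - k) / 2 := by omega
      · have : (Prec (n + 1)).coeff k = 0 :=
          coeff_eq_zero_of_natDegree_lt (by rw [d0]; omega)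
        simp [this]
    calc ((X * Prec (n + 2)).coeff k + (C X * Prec (n + 1)).coeff k).natDegree ≤
        max ((X * Prec (n + 2)).coeff k).natDegree
          ((C X * Prec (n + 1)).coeff k).natDegree := natDegree_add_le _ _
      _ ≤ (n + 2 - k) / 2 := max_le h1 h2

theorem stmt_8 (n : ℕ) (hn : 1 ≤ n) :
    (Prec n).Monic ∧ (Prec n).natDegree = n - 1 ∧
      ∀ k : ℕ, ((Prec n).coeff k).natDegree ≤ (n - 1 - k) / 2 := by
  obtain ⟨m, rfl⟩ := Nat.exists_eq_add_of_le hn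
  simpa [Nat.add_comm] using Prec_key m
end

section
/- For each n ≥ 1 and each fixed b < 0, the polynomial a ↦ P_n(a,b) has n-1 distinct real roots, where P_n is defined by P_{n+2} = aP_{n+1} + bP_n, P_0 = 0, P_1 = 1. -/
/-- `Pr n a b` is defined by `Pr 0 = 0`, `Pr 1 = 1`,
`Pr (n+2) = a * Pr (n+1) a b + b * Pr n a b`. -/
def Pr : ℕ → ℝ → ℝ → ℝ
  | 0, _, _ => 0
  | 1, _, _ => 1
  | (n + 2), a, b => a * Pr (n + 1) a b + b * Pr n a b

/-!
Substituting `a ↦ c * a`, `b ↦ c ^ 2 * b` multiplies `Pr (n + 1)` by `c ^ n`, so for `b = -c ^ 2`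
we may take `b = -1`, where `Pr (n + 1) (2 * x) (-1)` is the Chebyshev polynomial `U n` of the
second kind. Its roots are the `n` distinct numbers `cos (k * π / (n + 1))`, `1 ≤ k ≤ n`.
-/

open Polynomial Polynomial.Chebyshev

theorem Pr_add_two (n : ℕ) (a b : ℝ) : Pr (n + 2) a b = a * Pr (n + 1) a b + b * Pr n a b := rfl

theorem Pr_succ_neg_one_eq_eval_S (n : ℕ) (x : ℝ) : Pr (n + 1) x (-1) = (S ℝ n).eval x := by
  induction n using Nat.twoStepInduction with
  | zero => simp [Pr]
  | one => simp [Pr]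
  | more n ih₁ ih₂ =>
    rw [Pr_add_two (n + 1), ih₁, ih₂]
    push_cast
    rw [S_add_two]
    simp only [eval_sub, eval_mul, eval_X]
    ring

theorem Pr_succ_mul_mul_sq (n : ℕ) (c a b : ℝ) :
    Pr (n + 1) (c * a) (c ^ 2 * b) = c ^ n * Pr (n + 1) a b := by
  induction n using Nat.twoStepInduction with
  | zero => simp [Pr]
  | one => simp [Pr]
  | more n ih₁ ih₂ =>
    rw [Pr_add_two, Pr_add_two (n + 1), ih₁, ih₂]
    ring

theorem Pr_succ_eq_pow_mul_eval_U (n : ℕ) {c : ℝ} (hc : c ≠ 0) (a : ℝ) :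
    Pr (n + 1) a (-c ^ 2) = c ^ n * (U ℝ n).eval ((2 * c)⁻¹ * a) := by
  have ha : c * (2 * ((2 * c)⁻¹ * a)) = a := by field_simp
  calc Pr (n + 1) a (-c ^ 2) = Pr (n + 1) (c * (2 * ((2 * c)⁻¹ * a))) (c ^ 2 * -1) := by
        rw [ha, mul_neg_one]
    _ = c ^ n * (S ℝ n).eval (2 * ((2 * c)⁻¹ * a)) := by
        rw [Pr_succ_mul_mul_sq, Pr_succ_neg_one_eq_eval_S]
    _ = c ^ n * (U ℝ n).eval ((2 * c)⁻¹ * a) := by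
        rw [← S_comp_two_mul_X, eval_comp]
        simp

theorem card_roots_toFinset_U_real (n : ℕ) : (U ℝ n).roots.toFinset.card = n := by
  rw [roots_U_real, Finset.val_toFinset, Finset.card_image_of_injOn, Finset.card_range]
  exact (Finset.range n).nodup_map_iff_injOn.mp (roots_U_real_nodup n)

theorem stmt_11 (n : ℕ) (hn : 1 ≤ n) (b : ℝ) (hb : b < 0) :
    ∃ s : Finset ℝ, s.card = n - 1 ∧ ∀ a : ℝ, Pr n a b = 0 ↔ a ∈ s := by
  obtain ⟨m, rfl⟩ := Nat.exists_eq_add_of_le' hn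
  obtain ⟨c, hc, rfl⟩ : ∃ c : ℝ, c ≠ 0 ∧ b = -c ^ 2 :=
    ⟨√(-b), (Real.sqrt_pos.2 (neg_pos.2 hb)).ne', by rw [Real.sq_sqrt (by linarith), neg_neg]⟩
  have h2c : 2 * c ≠ 0 := by positivity
  refine ⟨(U ℝ m).roots.toFinset.map (Equiv.mulLeft₀ (2 * c) h2c).toEmbedding, ?_, fun a => ?_⟩
  · rw [Finset.card_map, card_roots_toFinset_U_real, Nat.add_sub_cancel]
  · rw [Finset.mem_map_equiv, Pr_succ_eq_pow_mul_eval_U m hc, Multiset.mem_toFinset,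
      mem_roots (U_ne_zero ℝ m (by omega)), IsRoot.def, mul_eq_zero]
    simp [hc]
end

section
/- Let f be a real polynomial of degree N with leading coefficient 1. For each fixed b ≤ B < 0, all real roots (in a) of the remainder coefficients P(f,a,b) and Q(f,a,b) are uniformly bounded: there is a constant C (depending on f and B but not on b ∈ (-∞, B]) such that every such root α satisfies |α| ≤ C·|b|^{1/2}. -/
open Polynomial Finset

/-!
If `|α|` is large compared with `√|b|`, then `x² - αx - b` has real roots `r`, `s` with
`rs = -b`, one of them (`r`) of size at least `|α| / 2` and the other one small. As
`f ≡ Px + Q`, we get `f r = P r + Q` and `f s = P s + Q`, so `P = 0` forces `f r = f s` and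
`Q = 0` forces `s f(r) = r f(s)`. Both fail because the leading term `rᴺ` of the monic `f`
makes `|s| |f r|` exceed `|r| |f s|`. Uniformity in `b ≤ B` costs the factor
`(1 + 1/√(-B))³`.
-/

namespace Polynomial

noncomputable def sumAbsCoeff (p : ℝ[X]) : ℝ := ∑ i ∈ range (p.natDegree + 1), |p.coeff i|

theorem abs_eval_le_sum_abs_coeff_mul {p : ℝ[X]} {n : ℕ} (hp : p.natDegree ≤ n) (x : ℝ) :
    |p.eval x| ≤ (∑ i ∈ range (n + 1), |p.coeff i|) * max 1 |x| ^ n := by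
  rw [eval_eq_sum_range' (Nat.lt_succ_of_le hp), sum_mul]
  refine (abs_sum_le_sum_abs _ _).trans (sum_le_sum fun i hi => ?_)
  rw [abs_mul, abs_pow]
  gcongr
  calc |x| ^ i ≤ max 1 |x| ^ i := by gcongr; exact le_max_right _ _
    _ ≤ max 1 |x| ^ n :=
      pow_le_pow_right₀ (le_max_left _ _) (Nat.lt_succ_iff.mp (mem_range.mp hi))

theorem abs_eval_le_sumAbsCoeff_mul (p : ℝ[X]) (x : ℝ) :
    |p.eval x| ≤ p.sumAbsCoeff * max 1 |x| ^ p.natDegree :=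
  abs_eval_le_sum_abs_coeff_mul le_rfl x

theorem Monic.one_le_sumAbsCoeff {f : ℝ[X]} (hf : f.Monic) : 1 ≤ f.sumAbsCoeff := by
  unfold sumAbsCoeff
  simpa [hf.coeff_natDegree] using
    single_le_sum (f := fun i => |f.coeff i|) (fun i _ => abs_nonneg _)
      (self_mem_range_succ f.natDegree)

theorem Monic.pow_le_two_mul_abs_eval {f : ℝ[X]} (hf : f.Monic) (hdeg : 0 < f.natDegree) {x : ℝ}
    (hx : 2 * f.sumAbsCoeff ≤ |x|) : |x| ^ f.natDegree ≤ 2 * |f.eval x| := by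
  set N := f.natDegree
  set S := f.sumAbsCoeff
  have hx1 : 1 ≤ |x| := by linarith [hf.one_le_sumAbsCoeff]
  have htail : |f.eraseLead.eval x| ≤ S * |x| ^ (N - 1) := by
    have hsum : ∑ i ∈ range (N - 1 + 1), |f.eraseLead.coeff i| ≤ S := by
      rw [Nat.sub_add_cancel hdeg]
      calc ∑ i ∈ range N, |f.eraseLead.coeff i| = ∑ i ∈ range N, |f.coeff i| :=
            sum_congr rfl fun i hi => by rw [eraseLead_coeff_of_ne i (mem_range.mp hi).ne]
        _ ≤ S := sum_le_sum_of_subset_of_nonneg (range_subset_range.mpr N.le_succ)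
            fun _ _ _ => abs_nonneg _
    calc |f.eraseLead.eval x|
        ≤ (∑ i ∈ range (N - 1 + 1), |f.eraseLead.coeff i|) * max 1 |x| ^ (N - 1) :=
          abs_eval_le_sum_abs_coeff_mul (eraseLead_natDegree_le f) x
      _ ≤ S * |x| ^ (N - 1) := by rw [max_eq_right hx1]; gcongr
  have hsplit : f.eval x = x ^ N + f.eraseLead.eval x := by
    conv_lhs => rw [← eraseLead_add_C_mul_X_pow f]
    simp [hf.leadingCoeff, add_comm, N]
  have hpow : |x| ^ N = |x| * |x| ^ (N - 1) := by rw [← pow_succ', Nat.sub_add_cancel hdeg]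
  have htail_le : S * |x| ^ (N - 1) ≤ |x| / 2 * |x| ^ (N - 1) := by gcongr; linarith
  have hrev : |x| ^ N - |f.eraseLead.eval x| ≤ |f.eval x| := by
    rw [hsplit, ← abs_pow]; exact abs_sub_abs_le_abs_add _ _
  nlinarith

theorem Monic.abs_mul_abs_eval_lt {f : ℝ[X]} (hf : f.Monic) (hdeg : 3 ≤ f.natDegree) {r s : ℝ}
    (hs : s ≠ 0) (hr : 2 * f.sumAbsCoeff ≤ |r|) (hsr : 2 * f.sumAbsCoeff * |s| < |r|)
    (hrrs : 2 * f.sumAbsCoeff < |r| ^ 2 * |s|) :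
    |r| * |f.eval s| < |s| * |f.eval r| := by
  set S := f.sumAbsCoeff
  obtain ⟨n, hn⟩ : ∃ n, f.natDegree = n + 1 := ⟨f.natDegree - 1, by omega⟩
  have hS := hf.one_le_sumAbsCoeff
  have hr1 : 1 ≤ |r| := by linarith
  have hs0 : 0 < |s| := abs_pos.mpr hs
  have hfr := hf.pow_le_two_mul_abs_eval (by omega) hr
  have hfs := abs_eval_le_sumAbsCoeff_mul f s
  rw [hn] at hfr hfs
  suffices h : 2 * S * |r| * max 1 |s| ^ (n + 1) < |s| * |r| ^ (n + 1) by
    have hfr' := mul_le_mul_of_nonneg_left hfr hs0.le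
    have hfs' := mul_le_mul_of_nonneg_left hfs (abs_nonneg r)
    nlinarith
  rcases le_or_gt |s| 1 with hs1 | hs1
  · rw [max_eq_left hs1, one_pow, mul_one]
    calc 2 * S * |r| < |r| ^ 2 * |s| * |r| := by gcongr
      _ = |s| * |r| ^ 3 := by ring
      _ ≤ |s| * |r| ^ (n + 1) := by gcongr; omega
  · rw [max_eq_right hs1.le]
    have h2S : 1 ≤ 2 * S := by linarith
    have hpow : 2 * S * |s| ^ n < |r| ^ n :=
      calc 2 * S * |s| ^ n ≤ (2 * S * |s|) ^ n := by
            rw [mul_pow]; gcongr; exact le_self_pow₀ h2S (by omega)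
        _ < |r| ^ n := by gcongr; omega
    calc 2 * S * |r| * |s| ^ (n + 1) = |r| * |s| * (2 * S * |s| ^ n) := by ring
      _ < |r| * |s| * |r| ^ n := by gcongr
      _ = |s| * |r| ^ (n + 1) := by ring

theorem eval_eq_coeff_modByMonic_quadratic {R : Type*} [CommRing R] [Nontrivial R]
    (f : R[X]) {a b x : R} (hx : x ^ 2 - a * x - b = 0) :
    f.eval x = (f %ₘ (X ^ 2 - C a * X - C b)).coeff 0 +
      (f %ₘ (X ^ 2 - C a * X - C b)).coeff 1 * x := by
  set q : R[X] := X ^ 2 - C a * X - C b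
  have hq : q.Monic := by simp only [q]; monicity!
  have hqdeg : q.natDegree = 2 := by simp only [q]; compute_degree!
  have hrem : (f %ₘ q).natDegree ≤ 1 := by
    have := natDegree_modByMonic_lt f hq (by rintro h; simp [h] at hqdeg)
    omega
  have hroot : aeval x q = 0 := by simp [q, hx]
  rw [← coe_aeval_eq_eval, ← aeval_modByMonic_eq_self_of_root hroot, coe_aeval_eq_eval,
    eq_X_add_C_of_natDegree_le_one hrem]
  simp [add_comm]

theorem modByMonic_quadratic_coeff_ne_zero {f : ℝ[X]} {a b r s : ℝ}
    (hsum : r + s = a) (hprod : r * s = -b) (hsr : |s| ≤ |r|)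
    (h : |r| * |f.eval s| < |s| * |f.eval r|) :
    (f %ₘ (X ^ 2 - C a * X - C b)).coeff 1 ≠ 0 ∧
      (f %ₘ (X ^ 2 - C a * X - C b)).coeff 0 ≠ 0 := by
  have hr := f.eval_eq_coeff_modByMonic_quadratic
    (show r ^ 2 - a * r - b = 0 by linear_combination r * hsum - hprod)
  have hs := f.eval_eq_coeff_modByMonic_quadratic
    (show s ^ 2 - a * s - b = 0 by linear_combination s * hsum - hprod)
  constructor
  · intro hP
    simp only [hr, hs, hP, zero_mul, add_zero] at h
    nlinarith [abs_nonneg ((f %ₘ (X ^ 2 - C a * X - C b)).coeff 0)]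
  · intro hQ
    simp only [hr, hs, hQ, zero_add, abs_mul] at h
    linarith

end Polynomial

theorem exists_roots_of_discrim_nonneg {a b : ℝ} (h : 0 ≤ a ^ 2 + 4 * b) :
    ∃ r s : ℝ, r + s = a ∧ r * s = -b ∧ |s| ≤ |r| := by
  set d := √(a ^ 2 + 4 * b)
  have hd : d ^ 2 = a ^ 2 + 4 * b := Real.sq_sqrt h
  rcases le_total |(a - d) / 2| |(a + d) / 2| with hle | hle
  · exact ⟨(a + d) / 2, (a - d) / 2, by ring, by linear_combination (-1/4 : ℝ) * hd, hle⟩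
  · exact ⟨(a - d) / 2, (a + d) / 2, by ring, by linear_combination (-1/4 : ℝ) * hd, hle⟩

theorem dominance_of_mul_eq_sq {S m t u v : ℝ} (hS : 1 ≤ S) (hm : 1 ≤ m) (hmt : 1 ≤ m * t)
    (huv : u * v = t ^ 2) (hu : 2 * S * m ^ 3 * t < u) :
    2 * S ≤ u ∧ 2 * S * v < u ∧ 2 * S < u ^ 2 * v := by
  have ht : 0 < t := pos_of_mul_pos_right (by linarith : 0 < m * t) (by linarith)
  have hu' : 2 * S * t < u :=
    calc 2 * S * t = 2 * S * 1 * t := by ring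
      _ ≤ 2 * S * m ^ 3 * t := by gcongr; exact one_le_pow₀ hm
      _ < u := hu
  refine ⟨?_, ?_, ?_⟩
  · calc 2 * S = 2 * S * (1 * 1) := by ring
      _ ≤ 2 * S * (m ^ 2 * (m * t)) := by gcongr; exact one_le_pow₀ hm
      _ = 2 * S * m ^ 3 * t := by ring
      _ ≤ u := hu.le
  · have hu0 : 0 < u := lt_of_le_of_lt (by positivity) hu'
    refine lt_of_mul_lt_mul_right ?_ hu0.le
    calc 2 * S * v * u = 2 * S * t ^ 2 := by rw [← huv]; ring
      _ < (2 * S * t) ^ 2 := by nlinarith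
      _ < u ^ 2 := by gcongr
      _ = u * u := sq u
  · calc 2 * S ≤ 2 * S * (m * t) ^ 3 :=
          le_mul_of_one_le_right (by positivity) (one_le_pow₀ hmt)
      _ = 2 * S * m ^ 3 * t * t ^ 2 := by ring
      _ < u * t ^ 2 := by gcongr
      _ = u ^ 2 * v := by rw [← huv]; ring

theorem stmt_16 (f : ℝ[X]) (hf : f.Monic) (N : ℕ) (hN : f.natDegree = N) (hN2 : 2 < N)
    (B : ℝ) (hB : B < 0) :
    ∃ C > (0 : ℝ), ∀ b ≤ B, ∀ α : ℝ,
      ((f %ₘ (X ^ 2 - Polynomial.C α * X - Polynomial.C b)).coeff 1 = 0 ∨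
       (f %ₘ (X ^ 2 - Polynomial.C α * X - Polynomial.C b)).coeff 0 = 0) →
      |α| ≤ C * |b| ^ ((1 : ℝ) / 2) := by
  have hS := hf.one_le_sumAbsCoeff
  set S := f.sumAbsCoeff
  have hc : 0 < √(-B) := Real.sqrt_pos.mpr (by linarith)
  set m := 1 + (√(-B))⁻¹
  have hm : 1 ≤ m := le_add_of_nonneg_right (inv_nonneg.mpr hc.le)
  refine ⟨4 * S * m ^ 3, by positivity, fun b hb α hroot => ?_⟩
  by_contra! hα
  have hb0 : b < 0 := hb.trans_lt hB
  rw [abs_of_neg hb0, ← Real.sqrt_eq_rpow] at hα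
  set t := √(-b)
  have hmt : 1 ≤ m * t :=
    calc 1 = (√(-B))⁻¹ * √(-B) := (inv_mul_cancel₀ hc.ne').symm
      _ ≤ m * t := by
        gcongr
        exacts [le_add_of_nonneg_left zero_le_one, Real.sqrt_le_sqrt (by linarith)]
  have ht2 : t ^ 2 = -b := Real.sq_sqrt (by linarith)
  have hdisc : 0 ≤ α ^ 2 + 4 * b := by
    have : 2 * t ≤ |α| := by
      have : 1 ≤ S * m ^ 3 := one_le_mul_of_one_le_of_one_le hS (one_le_pow₀ hm)
      nlinarith [Real.sqrt_nonneg (-b)]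
    nlinarith [sq_abs α, Real.sqrt_nonneg (-b)]
  obtain ⟨r, s, hsum, hprod, hsr⟩ := exists_roots_of_discrim_nonneg hdisc
  have hrs : |r| * |s| = t ^ 2 := by rw [← abs_mul, hprod, ht2, abs_of_pos (by linarith)]
  have hr : 2 * S * m ^ 3 * t < |r| := by linarith [hsum ▸ abs_add_le r s]
  obtain ⟨h1, h2, h3⟩ := dominance_of_mul_eq_sq hS hm hmt hrs hr
  have hs : s ≠ 0 := by rintro rfl; linarith [mul_zero r]
  have hPQ := modByMonic_quadratic_coeff_ne_zero hsum hprod hsr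
    (hf.abs_mul_abs_eval_lt (by omega) hs h1 h2 h3)
  exact hroot.elim hPQ.1 hPQ.2
end
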